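/- Let R be a ring and M an R-bimodule. The trivial extension T(R, M) (the square-zero extension of R by M, with multiplication (r, m)(s, n) = (rs, rn + ms)) is a GWNC ring if and only if R is a GWNC ring. -/

import Mathlib

/-!
Both units and nilpotents of `TrivSqZeroExt R M` are detected by the first coordinate, the
latter because `M` squares to zero. Hence a decomposition `x.fst = q ± e` lifts to
`x = (x ∓ inl e) ± inl e`, and conversely the projection `fst` carries decompositions down.
-/

def IsWeaklyNilCleanElem {R : Type*} [Ring R] (a : R) : Prop :=
  ∃ e q : R, IsIdempotentElem e ∧ IsNilpotent q ∧ (a = q + e ∨ a = q - e)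

def IsGWNCRing (R : Type*) [Ring R] : Prop :=
  ∀ a : R, ¬IsUnit a → IsWeaklyNilCleanElem a

theorem IsWeaklyNilCleanElem.map {R S F : Type*} [Ring R] [Ring S] [FunLike F R S]
    [RingHomClass F R S] (f : F) {a : R} (ha : IsWeaklyNilCleanElem a) :
    IsWeaklyNilCleanElem (f a) := by
  obtain ⟨e, q, he, hq, rfl | rfl⟩ := ha
  · exact ⟨f e, f q, he.map f, hq.map f, .inl (map_add f q e)⟩
  · exact ⟨f e, f q, he.map f, hq.map f, .inr (map_sub f q e)⟩

namespace TrivSqZeroExt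

variable {R M : Type*} [Ring R] [AddCommGroup M] [Module R M] [Module Rᵐᵒᵖ M]
  [SMulCommClass R Rᵐᵒᵖ M]

theorem isWeaklyNilCleanElem_iff_fst {x : TrivSqZeroExt R M} :
    IsWeaklyNilCleanElem x ↔ IsWeaklyNilCleanElem x.fst := by
  refine ⟨fun hx => hx.map (fstHom ℤ R M), ?_⟩
  rintro ⟨e, q, he, hq, hx⟩
  have hinl : IsIdempotentElem (inl e : TrivSqZeroExt R M) := by
    rw [IsIdempotentElem, inl_mul_inl, he.eq]
  rcases hx with hx | hx
  · refine ⟨inl e, x - inl e, hinl, ?_, .inl (sub_add_cancel x _).symm⟩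
    exact isNilpotent_iff_isNilpotent_fst.2 (by simpa [hx] using hq)
  · refine ⟨inl e, x + inl e, hinl, ?_, .inr (add_sub_cancel_right x _).symm⟩
    exact isNilpotent_iff_isNilpotent_fst.2 (by simpa [hx] using hq)

end TrivSqZeroExt

open TrivSqZeroExt in
theorem trivSqZeroExt_isGWNC_iff (R M : Type*) [Ring R] [AddCommGroup M]
    [Module R M] [Module Rᵐᵒᵖ M] [SMulCommClass R Rᵐᵒᵖ M] :
    IsGWNCRing (TrivSqZeroExt R M) ↔ IsGWNCRing R := by
  refine ⟨fun h a ha => ?_, fun h x hx => ?_⟩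
  · have hinl : ¬IsUnit (inl a : TrivSqZeroExt R M) := isUnit_inl_iff.not.2 ha
    exact isWeaklyNilCleanElem_iff_fst.1 (h _ hinl)
  · exact isWeaklyNilCleanElem_iff_fst.2 (h x.fst (isUnit_iff_isUnit_fst.not.1 hx))
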